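/- arXiv:2605.05149 — 4 statements merged into one kernel-verified Lean document; each statement's English description precedes it below -/
import Mathlib

section
/- Let G be a graph of maximum degree Δ and let λ ∈ [0,∞)^{V(G)} satisfy λ_u < 1/Δ for all u. Then the expected size of a random independent set from the hard-core model at fugacity λ satisfies E|X| ≥ Σ_{u∈V(G)} λ_u/(1 + (d_u+1)λ_u), where d_u is the degree of u. -/
/-!
Write `p u` for the probability that `u ∈ X` and `m u = λ u / (1 + λ u)`. Removing `u` is a
bijection from the independent sets containing `u` onto those avoiding the closed
neighbourhood `N[u]`, multiplying weights by `1 / λ u`; every other independent set meets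
`N[u]`. Together these give `p u ≥ m u * (1 - ∑_{w ∼ u} p w)`.

With `A` the adjacency matrix and `M = diag m`, the bound `m ≤ 1 / (Δ + 1)` makes
`r ↦ 1 - A M r` a contraction of `[0, 1]^V`, so `r + A M r = 1` has a solution `r ≥ 0`.
Such an `r` is feasible for the dual of the linear program `p + M A p ≥ m`, hence
`E|X| = ∑ p ≥ ∑ m r`.

Finally, the form `B(x, y) = ⟪x, M (I + A M) y⟫` is symmetric and, as `d m ≤ 1`, positive
semidefinite. For `σ = 1 / (1 + d m)`: `B(r, r) = ∑ m r`, `B(σ, r) = ∑ m σ`, and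
`B(σ, σ) ≤ ∑ m σ`, so expanding `0 ≤ B(σ - r, σ - r)` gives
`∑ m r ≥ ∑ m / (1 + d m) = ∑ λ / (1 + (d + 1) λ)`.
-/

open Finset

theorem add_one_mul_div_one_add_le_one {d x : ℝ} (hx : 0 ≤ x) (h : x < 1 / d) :
    (d + 1) * (x / (1 + x)) ≤ 1 := by
  have hdx : d * x ≤ 1 := by
    rcases le_or_gt d 0 with hd | hd
    · nlinarith
    · linarith [(lt_div_iff₀' hd).1 h]
  rw [mul_div_assoc', div_le_one (by linarith)]
  linarith

namespace SimpleGraph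

variable {V : Type*} [Fintype V] (G : SimpleGraph V) [DecidableRel G.Adj]

theorem sum_sum_neighborFinset_comm {M : Type*} [AddCommMonoid M] (f : V → V → M) :
    ∑ u, ∑ w ∈ G.neighborFinset u, f u w = ∑ u, ∑ w ∈ G.neighborFinset u, f w u :=
  sum_comm' fun u w => by simp [G.adj_comm]

theorem sum_sum_neighborFinset_eq_sum_degree_smul {M : Type*} [AddCommMonoid M] (f : V → M) :
    ∑ u, ∑ w ∈ G.neighborFinset u, f w = ∑ u, G.degree u • f u := by
  rw [sum_sum_neighborFinset_comm]
  simp [card_neighborFinset_eq_degree]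

theorem sum_sum_neighborFinset_mul_le (f g : V → ℝ) :
    ∑ u, ∑ w ∈ G.neighborFinset u, f u * g w ≤
      (∑ u, G.degree u * f u ^ 2 + ∑ u, G.degree u * g u ^ 2) / 2 := by
  calc ∑ u, ∑ w ∈ G.neighborFinset u, f u * g w
      ≤ ∑ u, ∑ w ∈ G.neighborFinset u, (f u ^ 2 + g w ^ 2) / 2 :=
        sum_le_sum fun u _ => sum_le_sum fun w _ => by nlinarith [sq_nonneg (f u - g w)]
    _ = (∑ u, G.degree u * f u ^ 2 + ∑ u, G.degree u * g u ^ 2) / 2 := by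
        simp only [← sum_div, sum_add_distrib, sum_sum_neighborFinset_eq_sum_degree_smul]
        simp [card_neighborFinset_eq_degree]

def weightedAdjForm (m x y : V → ℝ) : ℝ :=
  ∑ u, m u * x u * (y u + ∑ w ∈ G.neighborFinset u, m w * y w)

variable (m : V → ℝ)

theorem weightedAdjForm_eq (x y : V → ℝ) :
    G.weightedAdjForm m x y =
      ∑ u, m u * x u * y u + ∑ u, ∑ w ∈ G.neighborFinset u, m u * x u * (m w * y w) := by
  simp only [weightedAdjForm, mul_add, mul_sum, sum_add_distrib]

theorem weightedAdjForm_comm (x y : V → ℝ) :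
    G.weightedAdjForm m x y = G.weightedAdjForm m y x := by
  rw [weightedAdjForm_eq, weightedAdjForm_eq, sum_sum_neighborFinset_comm]
  congr 1
  · exact sum_congr rfl fun u _ => by ring
  · exact sum_congr rfl fun u _ => sum_congr rfl fun w _ => by ring

theorem weightedAdjForm_sub_sub (x y : V → ℝ) :
    G.weightedAdjForm m (x - y) (x - y) = G.weightedAdjForm m x x - G.weightedAdjForm m x y -
      G.weightedAdjForm m y x + G.weightedAdjForm m y y := by
  simp only [weightedAdjForm, ← sum_sub_distrib, ← sum_add_distrib]
  refine sum_congr rfl fun u _ => ?_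
  simp only [Pi.sub_apply, mul_sub, sum_sub_distrib]
  ring

theorem weightedAdjForm_self_nonneg (hm0 : ∀ u, 0 ≤ m u) (hm : ∀ u, G.degree u * m u ≤ 1)
    (x : V → ℝ) : 0 ≤ G.weightedAdjForm m x x := by
  have hcross : -∑ u, ∑ w ∈ G.neighborFinset u, m u * x u * (m w * x w) ≤
      ∑ u, G.degree u * (m u * x u) ^ 2 := by
    have := G.sum_sum_neighborFinset_mul_le (fun u => m u * x u) (fun u => -(m u * x u))
    simp only [mul_neg, sum_neg_distrib, neg_sq] at this
    linarith
  have hdiag : ∀ u, G.degree u * (m u * x u) ^ 2 ≤ m u * x u * x u := fun u => by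
    have := mul_le_mul_of_nonneg_right (hm u) (mul_nonneg (hm0 u) (sq_nonneg (x u)))
    linarith
  rw [weightedAdjForm_eq]
  linarith [sum_le_sum fun u (_ : u ∈ univ) => hdiag u]

theorem weightedAdjForm_le_of_mul_eq_one (σ : V → ℝ)
    (hσ : ∀ u, σ u * (1 + G.degree u * m u) = 1) :
    G.weightedAdjForm m σ σ ≤ ∑ u, m u * σ u := by
  have hcross := G.sum_sum_neighborFinset_mul_le (fun u => m u * σ u) (fun u => m u * σ u)
  have hdiag : ∀ u, m u * σ u = m u * σ u * σ u + G.degree u * (m u * σ u) ^ 2 := fun u => by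
    linear_combination (-(m u * σ u)) * hσ u
  rw [weightedAdjForm_eq, sum_congr rfl fun u _ => hdiag u, sum_add_distrib]
  linarith

theorem sum_div_one_add_degree_mul_le (hm0 : ∀ u, 0 ≤ m u) (hm : ∀ u, G.degree u * m u ≤ 1)
    (r : V → ℝ) (hr : ∀ u, r u + ∑ w ∈ G.neighborFinset u, m w * r w = 1) :
    ∑ u, m u / (1 + G.degree u * m u) ≤ ∑ u, m u * r u := by
  set σ : V → ℝ := fun u => 1 / (1 + G.degree u * m u)
  have hσ : ∀ u, σ u * (1 + G.degree u * m u) = 1 := fun u =>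
    one_div_mul_cancel (by positivity [hm0 u])
  have hσr : G.weightedAdjForm m σ r = ∑ u, m u * σ u := by simp [weightedAdjForm, hr]
  have hrr : G.weightedAdjForm m r r = ∑ u, m u * r u := by simp [weightedAdjForm, hr]
  have hpsd := G.weightedAdjForm_self_nonneg m hm0 hm (σ - r)
  rw [weightedAdjForm_sub_sub, weightedAdjForm_comm G m r σ, hσr, hrr] at hpsd
  have hσσ := G.weightedAdjForm_le_of_mul_eq_one m σ hσ
  simp only [σ, ← div_eq_mul_one_div] at hσσ hpsd ⊢
  linarith

theorem sum_mul_le_sum_of_mul_one_sub_sum_le (p r : V → ℝ)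
    (hp : ∀ u, m u * (1 - ∑ w ∈ G.neighborFinset u, p w) ≤ p u) (hr0 : ∀ u, 0 ≤ r u)
    (hr : ∀ u, r u + ∑ w ∈ G.neighborFinset u, m w * r w = 1) :
    ∑ u, m u * r u ≤ ∑ u, p u := by
  calc ∑ u, m u * r u
      ≤ ∑ u, (p u + m u * ∑ w ∈ G.neighborFinset u, p w) * r u :=
        sum_le_sum fun u _ => mul_le_mul_of_nonneg_right (by linarith [hp u]) (hr0 u)
    _ = ∑ u, p u * r u + ∑ u, ∑ w ∈ G.neighborFinset u, m u * r u * p w := by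
        simp only [add_mul, sum_add_distrib, sum_mul, mul_sum]
        congr 1
        exact sum_congr rfl fun u _ => sum_congr rfl fun w _ => by ring
    _ = ∑ u, p u * (r u + ∑ w ∈ G.neighborFinset u, m w * r w) := by
        rw [sum_sum_neighborFinset_comm]
        simp only [mul_add, sum_add_distrib, mul_sum]
        congr 1
        exact sum_congr rfl fun u _ => sum_congr rfl fun w _ => by ring
    _ = ∑ u, p u := by simp [hr]

theorem sum_neighborFinset_le_of_mul_le (hm : ∀ u, (G.maxDegree + 1) * m u ≤ 1) (u : V) :
    ∑ w ∈ G.neighborFinset u, m w ≤ G.maxDegree / (G.maxDegree + 1) := by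
  have hm' : ∀ w, m w ≤ 1 / (G.maxDegree + 1) := fun w => by
    rw [le_div_iff₀ (by positivity)]; linarith [hm w]
  calc ∑ w ∈ G.neighborFinset u, m w
      ≤ ∑ w ∈ G.neighborFinset u, 1 / ((G.maxDegree : ℝ) + 1) := sum_le_sum fun w _ => hm' w
    _ ≤ G.maxDegree / (G.maxDegree + 1) := by
        rw [sum_const, card_neighborFinset_eq_degree, nsmul_eq_mul, mul_one_div]
        gcongr
        exact_mod_cast G.degree_le_maxDegree u

theorem exists_nonneg_add_sum_neighborFinset_mul_eq_one (hm0 : ∀ u, 0 ≤ m u)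
    (hm : ∀ u, (G.maxDegree + 1) * m u ≤ 1) :
    ∃ r : V → ℝ, (∀ u, 0 ≤ r u) ∧
      ∀ u, r u + ∑ w ∈ G.neighborFinset u, m w * r w = 1 := by
  set F : (V → ℝ) → V → ℝ := fun r u => 1 - ∑ w ∈ G.neighborFinset u, m w * r w
  set K : NNReal := G.maxDegree / (G.maxDegree + 1)
  have hK : (K : ℝ) = G.maxDegree / (G.maxDegree + 1) := by simp [K]
  have hF : ContractingWith K F := by
    refine ⟨?_, LipschitzWith.of_dist_le_mul fun x y =>
      (dist_pi_le_iff (by positivity)).2 fun u => ?_⟩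
    · rw [div_lt_one (by positivity)]
      exact lt_add_one _
    rw [Real.dist_eq, dist_eq_norm]
    calc |F x u - F y u| = |∑ w ∈ G.neighborFinset u, m w * (y w - x w)| := by
          simp only [F, mul_sub, sum_sub_distrib]
          ring_nf
      _ ≤ ∑ w ∈ G.neighborFinset u, m w * ‖x - y‖ := by
          refine (abs_sum_le_sum_abs _ _).trans (sum_le_sum fun w _ => ?_)
          rw [abs_mul, abs_of_nonneg (hm0 w), abs_sub_comm]
          exact mul_le_mul_of_nonneg_left (norm_le_pi_norm (x - y) w) (hm0 w)
      _ ≤ K * ‖x - y‖ := by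
          rw [← sum_mul, hK]
          exact mul_le_mul_of_nonneg_right (G.sum_neighborFinset_le_of_mul_le m hm u)
            (norm_nonneg _)
  set s : Set (V → ℝ) := Set.univ.pi fun _ => Set.Icc 0 1
  have hs : Set.MapsTo F s s := by
    intro r hr u _
    have h0 : 0 ≤ ∑ w ∈ G.neighborFinset u, m w * r w :=
      sum_nonneg fun w _ => mul_nonneg (hm0 w) (hr w trivial).1
    have h1 : ∑ w ∈ G.neighborFinset u, m w * r w ≤ 1 :=
      calc ∑ w ∈ G.neighborFinset u, m w * r w ≤ ∑ w ∈ G.neighborFinset u, m w :=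
            sum_le_sum fun w _ => mul_le_of_le_one_right (hm0 w) (hr w trivial).2
        _ ≤ G.maxDegree / (G.maxDegree + 1) := G.sum_neighborFinset_le_of_mul_le m hm u
        _ ≤ 1 := div_le_one_of_le₀ (by linarith) (by positivity)
    exact ⟨by linarith, by linarith⟩
  have hmem : hF.fixedPoint F ∈ s :=
    (isClosed_set_pi fun _ _ => isClosed_Icc).mem_of_tendsto (hF.tendsto_iterate_fixedPoint 0)
      (Filter.Eventually.of_forall fun n => hs.iterate n fun u _ => by simp)
  refine ⟨hF.fixedPoint F, fun u => (hmem u trivial).1, fun u => ?_⟩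
  have hfix := congrFun (hF.fixedPoint_isFixedPt (f := F)) u
  simp only [F] at hfix
  linarith

end SimpleGraph

namespace HardCore

variable {V : Type*} [Fintype V] [DecidableEq V] (G : SimpleGraph V) [DecidableRel G.Adj]
  (lam : V → ℝ)

def indepSets : Finset (Finset V) :=
  univ.filter fun s => ∀ v ∈ s, ∀ w ∈ s, ¬ G.Adj v w

def partitionFunction : ℝ :=
  ∑ s ∈ indepSets G, ∏ v ∈ s, lam v

@[simp]
theorem mem_indepSets {s : Finset V} :
    s ∈ indepSets G ↔ ∀ v ∈ s, ∀ w ∈ s, ¬ G.Adj v w := by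
  simp [indepSets]

theorem partitionFunction_pos (hlam : ∀ v, 0 ≤ lam v) : 0 < partitionFunction G lam := by
  calc (0 : ℝ) < ∏ v ∈ (∅ : Finset V), lam v := by simp
    _ ≤ partitionFunction G lam :=
      single_le_sum (f := fun s => ∏ v ∈ s, lam v) (fun s _ => prod_nonneg fun v _ => hlam v)
        (by simp)

def occupiedWeight (u : V) : ℝ :=
  ∑ s ∈ indepSets G with u ∈ s, ∏ v ∈ s, lam v

def uncoveredWeight (u : V) : ℝ :=
  ∑ s ∈ indepSets G with Disjoint s (insert u (G.neighborFinset u)), ∏ v ∈ s, lam v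

noncomputable def occupancy (u : V) : ℝ :=
  occupiedWeight G lam u / partitionFunction G lam

theorem sum_occupancy_eq :
    ∑ u, occupancy G lam u =
      (∑ s ∈ indepSets G, (#s : ℝ) * ∏ v ∈ s, lam v) / partitionFunction G lam := by
  simp only [occupancy, occupiedWeight, ← sum_div, sum_filter]
  rw [sum_comm]
  congr 1
  refine sum_congr rfl fun s _ => ?_
  rw [sum_ite_mem, univ_inter, sum_const, nsmul_eq_mul]

theorem occupiedWeight_eq_mul_uncoveredWeight (u : V) :
    occupiedWeight G lam u = lam u * uncoveredWeight G lam u := by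
  rw [uncoveredWeight, mul_sum]
  refine sum_nbij' (·.erase u) (insert u) ?_ ?_ ?_ ?_ ?_
  · simp +contextual [disjoint_left]
  · simp +contextual [disjoint_left, G.adj_comm]
  · simp +contextual
  · simp +contextual
  · exact fun s hs => (mul_prod_erase s lam (mem_filter.1 hs).2).symm

theorem partitionFunction_le_uncoveredWeight_add (hlam : ∀ v, 0 ≤ lam v) (u : V) :
    partitionFunction G lam ≤ uncoveredWeight G lam u + (occupiedWeight G lam u +
      ∑ w ∈ G.neighborFinset u, occupiedWeight G lam w) := by
  set N := insert u (G.neighborFinset u)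
  have hwt : ∀ s : Finset V, 0 ≤ ∏ v ∈ s, lam v := fun s => prod_nonneg fun v _ => hlam v
  have hcount : ∑ x ∈ N, occupiedWeight G lam x =
      ∑ s ∈ indepSets G, #(s ∩ N) * ∏ v ∈ s, lam v := by
    simp only [occupiedWeight, sum_filter]
    rw [sum_comm]
    refine sum_congr rfl fun s _ => ?_
    rw [sum_ite_mem, sum_const, nsmul_eq_mul, inter_comm]
  have hcovered : ∑ s ∈ indepSets G with ¬ Disjoint s N, ∏ v ∈ s, lam v ≤
      ∑ s ∈ indepSets G, #(s ∩ N) * ∏ v ∈ s, lam v := by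
    calc ∑ s ∈ indepSets G with ¬ Disjoint s N, ∏ v ∈ s, lam v
        ≤ ∑ s ∈ indepSets G with ¬ Disjoint s N, #(s ∩ N) * ∏ v ∈ s, lam v :=
          sum_le_sum fun s hs => le_mul_of_one_le_left (hwt s) <| by
            exact_mod_cast card_pos.2 (not_disjoint_iff_nonempty_inter.1 (mem_filter.1 hs).2)
      _ ≤ ∑ s ∈ indepSets G, #(s ∩ N) * ∏ v ∈ s, lam v :=
          sum_le_sum_of_subset_of_nonneg (filter_subset _ _)
            fun s _ _ => mul_nonneg (Nat.cast_nonneg _) (hwt s)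
  rw [← sum_insert (G.notMem_neighborFinset_self u), hcount, partitionFunction,
    uncoveredWeight, ← sum_filter_add_sum_filter_not (indepSets G) (fun s => Disjoint s N)]
  exact (add_le_add_iff_left _).2 hcovered

theorem mul_one_sub_sum_occupancy_le (hlam : ∀ v, 0 ≤ lam v) (u : V) :
    lam u / (1 + lam u) * (1 - ∑ w ∈ G.neighborFinset u, occupancy G lam w) ≤
      occupancy G lam u := by
  have hZ := partitionFunction_pos G lam hlam
  have hbound :=
    mul_le_mul_of_nonneg_left (partitionFunction_le_uncoveredWeight_add G lam hlam u) (hlam u)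
  rw [mul_add, ← occupiedWeight_eq_mul_uncoveredWeight] at hbound
  simp only [occupancy, ← sum_div]
  rw [div_mul_eq_mul_div, div_le_div_iff₀ (by positivity [hlam u]) hZ]
  rw [mul_assoc, sub_mul, one_mul, div_mul_cancel₀ _ hZ.ne']
  linarith

end HardCore

open HardCore in
/-- Multivariate lower bound on the expected size of an independent set in the
hard-core model, in terms of the degree sequence, for fugacities below `1/Δ`. -/
theorem multivar_occupancy_lower_bound {V : Type*} [Fintype V] [DecidableEq V]
    (G : SimpleGraph V) [DecidableRel G.Adj] (lam : V → ℝ)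
    (hlam0 : ∀ v, 0 ≤ lam v) (hlam : ∀ v, lam v < 1 / (G.maxDegree : ℝ)) :
    let indepSets : Finset (Finset V) :=
      Finset.univ.filter (fun s => ∀ v ∈ s, ∀ w ∈ s, ¬ G.Adj v w)
    let Z : ℝ := ∑ s ∈ indepSets, ∏ v ∈ s, lam v
    (∑ s ∈ indepSets, (s.card : ℝ) * ∏ v ∈ s, lam v) / Z ≥
      ∑ u : V, lam u / (1 + ((G.degree u : ℝ) + 1) * lam u) := by
  intro indepSets Z
  rw [ge_iff_le]
  set m : V → ℝ := fun u => lam u / (1 + lam u)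
  have hm0 : ∀ u, 0 ≤ m u := fun u => div_nonneg (hlam0 u) (by linarith [hlam0 u])
  have hm : ∀ u, (G.maxDegree + 1) * m u ≤ 1 := fun u =>
    add_one_mul_div_one_add_le_one (hlam0 u) (hlam u)
  have hdm : ∀ u, G.degree u * m u ≤ 1 := fun u => by
    have hdeg : (G.degree u : ℝ) ≤ G.maxDegree + 1 := by
      exact_mod_cast (G.degree_le_maxDegree u).trans (Nat.le_succ _)
    exact (mul_le_mul_of_nonneg_right hdeg (hm0 u)).trans (hm u)
  obtain ⟨r, hr0, hr⟩ := G.exists_nonneg_add_sum_neighborFinset_mul_eq_one m hm0 hm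
  refine le_of_le_of_eq ?_ (sum_occupancy_eq G lam)
  calc ∑ u, lam u / (1 + (G.degree u + 1) * lam u) = ∑ u, m u / (1 + G.degree u * m u) :=
        sum_congr rfl fun u _ => by
          have hlu := hlam0 u
          simp only [m]
          field_simp
          ring
    _ ≤ ∑ u, m u * r u := G.sum_div_one_add_degree_mul_le m hm0 hdm r hr
    _ ≤ ∑ u, occupancy G lam u :=
        G.sum_mul_le_sum_of_mul_one_sub_sum_le m _ r
          (mul_one_sub_sum_occupancy_le G lam hlam0) hr0 hr
end

section
/- Let G be a finite graph with no isolated vertices, A its adjacency matrix, and B = diag(β), Γ = diag(γ) with all β_u, γ_u > 0. Suppose d_u γ_u/β_u < 1 for all u and Σ_{v∈N(u)} γ_v/β_v ≤ 1 for all u. Then the vector y' = (B + AΓ)^{-1}·1 is entrywise nonnegative. -/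
/-!
Factor `B + AΓ = (1 + C) B` with `C = A · diag(γ/β)`, a nonnegative matrix whose column sums
`d_v γ_v / β_v` are `< 1` and whose row sums `∑_{v ∈ N(u)} γ_v / β_v` are `≤ 1`. Summing the
entries shows that such a `C` admits no nonzero `x ≥ 0` with `x ≤ C x`. Applied to `|x|` this makes
`1 + C` invertible. For the solution `w` of `w + C w = 1`, one has `w = 1 - C w ≤ 1 + C w⁻`, hence
`-w = C w - 1 ≤ C 1 - 1 + C² w⁻ ≤ C² w⁻`; so the negative part satisfies `w⁻ ≤ C² w⁻`, and `C²`
again has column sums `< 1`, forcing `w⁻ = 0`.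
-/

open Finset Matrix

namespace Matrix

variable {ι : Type*} [Fintype ι] {C : Matrix ι ι ℝ}

lemma mulVec_nonneg_of_nonneg (hC : ∀ i j, 0 ≤ C i j) {x : ι → ℝ} (hx : 0 ≤ x) :
    0 ≤ C *ᵥ x :=
  fun i => dotProduct_nonneg_of_nonneg (hC i) hx

lemma mulVec_mono_of_nonneg (hC : ∀ i j, 0 ≤ C i j) {x y : ι → ℝ} (hxy : x ≤ y) :
    C *ᵥ x ≤ C *ᵥ y :=
  fun i => dotProduct_le_dotProduct_of_nonneg_left hxy (hC i)

lemma abs_mulVec_le (hC : ∀ i j, 0 ≤ C i j) (x : ι → ℝ) : |C *ᵥ x| ≤ C *ᵥ |x| := fun i =>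
  (abs_sum_le_sum_abs _ _).trans_eq <| sum_congr rfl fun j _ => by
    rw [abs_mul, abs_of_nonneg (hC i j), Pi.abs_apply]

lemma eq_zero_of_le_mulVec (hcol : ∀ j, ∑ i, C i j < 1) {x : ι → ℝ} (hx : 0 ≤ x)
    (hle : x ≤ C *ᵥ x) : x = 0 := by
  have hpos : ∀ j, 0 < 1 - ∑ i, C i j := fun j => sub_pos.mpr (hcol j)
  have hterm_nonneg : ∀ j ∈ univ, 0 ≤ (1 - ∑ i, C i j) * x j :=
    fun j _ => mul_nonneg (hpos j).le (hx j)
  have hsum : ∑ j, (1 - ∑ i, C i j) * x j ≤ 0 := by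
    have : ∑ i, x i ≤ ∑ i, (C *ᵥ x) i := sum_le_sum fun i _ => hle i
    simp only [mulVec, dotProduct] at this
    rw [sum_comm] at this
    simpa [sub_mul, sum_mul] using this
  have hterm := (sum_eq_zero_iff_of_nonneg hterm_nonneg).mp
    (hsum.antisymm (sum_nonneg hterm_nonneg))
  funext j
  exact (mul_eq_zero.mp (hterm j (mem_univ j))).resolve_left (hpos j).ne'

lemma sum_mul_apply_le (hcol : ∀ k, ∑ i, C i k ≤ 1) {D : Matrix ι ι ℝ}
    (hD : ∀ k j, 0 ≤ D k j) (j : ι) : ∑ i, (C * D) i j ≤ ∑ k, D k j := by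
  simp only [mul_apply]
  rw [sum_comm]
  simp only [← sum_mul]
  exact sum_le_sum fun k _ => mul_le_of_le_one_left (hD k j) (hcol k)

lemma isUnit_one_add_of_nonneg [DecidableEq ι] (hC : ∀ i j, 0 ≤ C i j)
    (hcol : ∀ j, ∑ i, C i j < 1) : IsUnit (1 + C) := by
  refine mulVec_injective_iff_isUnit.mp fun x y hxy => ?_
  have hfix : x - y = -(C *ᵥ (x - y)) := by
    have h : (1 + C) *ᵥ (x - y) = 0 := by rw [mulVec_sub, hxy, sub_self]
    rw [add_mulVec, one_mulVec] at h
    exact eq_neg_of_add_eq_zero_left h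
  have habs : |x - y| ≤ C *ᵥ |x - y| := by
    conv_lhs => rw [hfix, abs_neg]
    exact abs_mulVec_le hC _
  have hzero := eq_zero_of_le_mulVec hcol (abs_nonneg _) habs
  funext i
  simpa [sub_eq_zero] using congrFun hzero i

lemma nonneg_of_add_mulVec_eq_one (hC : ∀ i j, 0 ≤ C i j) (hcol : ∀ j, ∑ i, C i j < 1)
    (hrow : ∀ i, ∑ j, C i j ≤ 1) {w : ι → ℝ} (hw : w + C *ᵥ w = 1) : 0 ≤ w := by
  have hCw : C *ᵥ w = 1 - w := eq_sub_of_add_eq' hw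
  have hC1 : C *ᵥ 1 ≤ 1 := fun i => by simpa [mulVec, dotProduct] using hrow i
  have hupper : w ≤ 1 + C *ᵥ w⁻ := by
    calc w = 1 + C *ᵥ (-w) := by rw [mulVec_neg, hCw]; abel
      _ ≤ 1 + C *ᵥ w⁻ := add_le_add_right (mulVec_mono_of_nonneg hC (neg_le_negPart w)) 1
  have hcycle : w⁻ ≤ (C * C) *ᵥ w⁻ := by
    have hCCm : 0 ≤ C *ᵥ (C *ᵥ w⁻) :=
      mulVec_nonneg_of_nonneg hC (mulVec_nonneg_of_nonneg hC (negPart_nonneg w))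
    rw [← mulVec_mulVec]
    refine sup_le ?_ hCCm
    calc -w = C *ᵥ w - 1 := by rw [hCw]; abel
      _ ≤ C *ᵥ (1 + C *ᵥ w⁻) - 1 := sub_le_sub_right (mulVec_mono_of_nonneg hC hupper) 1
      _ = (C *ᵥ 1 - 1) + C *ᵥ (C *ᵥ w⁻) := by rw [mulVec_add]; abel
      _ ≤ C *ᵥ (C *ᵥ w⁻) := add_le_of_nonpos_left (sub_nonpos.mpr hC1)
  have hcolCC : ∀ j, ∑ i, (C * C) i j < 1 := fun j =>
    (sum_mul_apply_le (fun k => (hcol k).le) hC j).trans_lt (hcol j)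
  exact negPart_eq_zero.mp (eq_zero_of_le_mulVec hcolCC (negPart_nonneg w) hcycle)

end Matrix

namespace SimpleGraph

variable {V α : Type*} [Fintype V] [DecidableEq V] (G : SimpleGraph V) [DecidableRel G.Adj]
  [NonAssocSemiring α]

lemma sum_adjMatrix_mul_diagonal_apply_left (c : V → α) (j : V) :
    ∑ i, (G.adjMatrix α * diagonal c) i j = G.degree j * c j := by
  simp only [mul_diagonal, G.isSymm_adjMatrix.apply j]
  exact G.adjMatrix_mulVec_const_apply

lemma sum_adjMatrix_mul_diagonal_apply_right (c : V → α) (i : V) :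
    ∑ j, (G.adjMatrix α * diagonal c) i j = ∑ j ∈ G.neighborFinset i, c j := by
  simp only [mul_diagonal]
  exact G.adjMatrix_mulVec_apply i c

end SimpleGraph

theorem dual_solution_nonneg_general {V : Type*} [Fintype V] [DecidableEq V]
    (G : SimpleGraph V) [DecidableRel G.Adj]
    (β γ : V → ℝ) (hβ : ∀ v, 0 < β v) (hγ : ∀ v, 0 < γ v)
    (hd : ∀ v, (G.degree v : ℝ) * γ v / β v < 1)
    (hsum : ∀ u, ∑ v ∈ G.neighborFinset u, γ v / β v ≤ 1) :
    let A : Matrix V V ℝ := G.adjMatrix ℝ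
    let B : Matrix V V ℝ := Matrix.diagonal β
    let Γ : Matrix V V ℝ := Matrix.diagonal γ
    ∀ u : V, 0 ≤ ((B + A * Γ)⁻¹ *ᵥ (fun _ => (1 : ℝ))) u := by
  intro A B Γ u
  set C := G.adjMatrix ℝ * diagonal (γ / β) with hCdef
  have hC : ∀ i j, 0 ≤ C i j := fun i j => by
    rw [hCdef, mul_diagonal]
    exact mul_nonneg (by simp only [G.adjMatrix_apply]; split_ifs <;> norm_num)
      (div_pos (hγ j) (hβ j)).le
  have hcol : ∀ j, ∑ i, C i j < 1 := fun j =>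
    (G.sum_adjMatrix_mul_diagonal_apply_left _ j).trans_lt (by simpa [mul_div_assoc] using hd j)
  have hrow : ∀ i, ∑ j, C i j ≤ 1 := fun i =>
    (G.sum_adjMatrix_mul_diagonal_apply_right _ i).trans_le (hsum i)
  have hfactor : B + A * Γ = (1 + C) * B := by
    have hγβ : (fun v => (γ / β) v * β v) = γ := funext fun v => div_mul_cancel₀ (γ v) (hβ v).ne'
    rw [add_mul, one_mul, hCdef, Matrix.mul_assoc, diagonal_mul_diagonal, hγβ]
  have hBunit : IsUnit B := isUnit_diagonal.mpr (Pi.isUnit_iff.mpr fun v => (hβ v).ne'.isUnit)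
  have hunit : IsUnit (B + A * Γ) := hfactor ▸ (isUnit_one_add_of_nonneg hC hcol).mul hBunit
  have hsolve : (1 + C) *ᵥ (B *ᵥ ((B + A * Γ)⁻¹ *ᵥ 1)) = 1 := by
    rw [mulVec_mulVec, ← hfactor, mulVec_mulVec,
      mul_nonsing_inv _ ((isUnit_iff_isUnit_det _).mp hunit), one_mulVec]
  have hw := nonneg_of_add_mulVec_eq_one hC hcol hrow
    (by rwa [add_mulVec, one_mulVec] at hsolve) u
  rw [mulVec_diagonal] at hw
  exact (mul_nonneg_iff_of_pos_left (hβ u)).mp hw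

/-- Under the local occupancy parameter conditions, `(B + AΓ)⁻¹ 1` is entrywise
nonnegative. -/
theorem dual_solution_nonneg {V : Type*} [Fintype V] [DecidableEq V]
    (G : SimpleGraph V) [DecidableRel G.Adj]
    (hiso : ∀ v, 0 < G.degree v)
    (β γ : V → ℝ) (hβ : ∀ v, 0 < β v) (hγ : ∀ v, 0 < γ v)
    (hd : ∀ v, (G.degree v : ℝ) * γ v / β v < 1)
    (hsum : ∀ u, ∑ v ∈ G.neighborFinset u, γ v / β v ≤ 1) :
    let A : Matrix V V ℝ := G.adjMatrix ℝ
    let B : Matrix V V ℝ := Matrix.diagonal β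
    let Γ : Matrix V V ℝ := Matrix.diagonal γ
    ∀ u : V, 0 ≤ ((B + A * Γ)⁻¹ *ᵥ (fun _ => (1 : ℝ))) u :=
  dual_solution_nonneg_general G β γ hβ hγ hd hsum
end

section
/- Let G be a finite graph with no isolated vertices, with Laplacian L = D − A, and let B = diag(β), Γ = diag(γ) with all entries positive satisfying d_u γ_u/β_u < 1 for all vertices u. Set H = B + DΓ. Then the spectral radius of L·Γ·H^{-1} is strictly less than 1. -/
/-!
Every entry of `M = L Γ H⁻¹` in column `v` is `L u v · γ_v / h_v` with `h_v = β_v + d_v γ_v`, and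
column `v` of `|L|` sums to `2 d_v`. So the absolute column sums of `M` are `2 d_v γ_v / h_v`,
which is `< 1` exactly when `d_v γ_v < β_v`. Since `M` and `Mᵀ` have the same spectrum, the
spectrum of `M` lies in the ball whose radius is the `ℓ^∞` operator norm of `Mᵀ`, i.e. the
largest absolute column sum of `M`.
-/

open Finset Matrix

namespace Matrix

theorem spectrum_transpose {R n : Type*} [CommRing R] [Fintype n] [DecidableEq n]
    (M : Matrix n n R) : spectrum R Mᵀ = spectrum R M := by
  ext μ
  rw [spectrum.mem_iff, spectrum.mem_iff, ← isUnit_transpose, transpose_sub,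
    algebraMap_eq_diagonal, diagonal_transpose, transpose_transpose]

attribute [local instance] Matrix.linftyOpNormedRing Matrix.linftyOpNormedAlgebra

theorem norm_lt_of_mem_spectrum_of_sum_norm_col_lt {𝕜 n : Type*} [NormedField 𝕜]
    [CompleteSpace 𝕜] [Fintype n] [DecidableEq n] {M : Matrix n n 𝕜} {r : ℝ}
    (hM : ∀ j, ∑ i, ‖M i j‖ < r) {μ : 𝕜} (hμ : μ ∈ spectrum 𝕜 M) : ‖μ‖ < r := by
  have : Nonempty n := by
    by_contra hn
    rw [not_nonempty_iff] at hn
    simp [spectrum.of_subsingleton] at hμ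
  -- The `ℓ^∞` operator norm induces the product uniformity only up to unfolding.
  have : @CompleteSpace (Matrix n n 𝕜) Matrix.linftyOpNormedRing.toUniformSpace := by
    exact (inferInstance : CompleteSpace (Matrix n n 𝕜))
  have hr : 0 < r := (sum_nonneg fun _ _ => norm_nonneg _).trans_lt (hM (Classical.arbitrary n))
  lift r to NNReal using hr.le
  calc ‖μ‖ ≤ ‖Mᵀ‖ := spectrum.norm_le_norm_of_mem (by rwa [spectrum_transpose])
    _ < r := by
      rw [linfty_opNorm_def, NNReal.coe_lt_coe, Finset.sup_lt_iff (mod_cast hr)]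
      intro i _
      rw [← NNReal.coe_lt_coe]
      push_cast
      exact hM i

end Matrix

namespace SimpleGraph

variable {V α : Type*} [Fintype V] [DecidableEq V] (G : SimpleGraph V) [DecidableRel G.Adj]
  [Ring α] [LinearOrder α] [IsStrictOrderedRing α]

theorem abs_lapMatrix_apply (i j : V) :
    |G.lapMatrix α i j| = G.degMatrix α i j + G.adjMatrix α i j := by
  rcases eq_or_ne i j with rfl | hij
  · simp [lapMatrix, degMatrix]
  · by_cases hadj : G.Adj i j <;> simp [lapMatrix, degMatrix, hij, hadj]

theorem sum_abs_lapMatrix_apply_left (j : V) : ∑ i, |G.lapMatrix α i j| = 2 * G.degree j := by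
  simp only [abs_lapMatrix_apply, sum_add_distrib, degMatrix, diagonal_apply, sum_ite_eq',
    mem_univ, if_true, adjMatrix_apply, G.adj_comm _ j, ← G.degree_eq_sum_if_adj]
  exact (two_mul _).symm

end SimpleGraph

theorem spectral_radius_LGammaHinv_lt_one_general {V : Type*} [Fintype V] [DecidableEq V]
    (G : SimpleGraph V) [DecidableRel G.Adj]
    (β γ : V → ℝ) (hβ : ∀ v, 0 < β v) (hγ : ∀ v, 0 < γ v)
    (hd : ∀ v, (G.degree v : ℝ) * γ v / β v < 1) :
    let A : Matrix V V ℝ := G.adjMatrix ℝ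
    let D : Matrix V V ℝ := Matrix.diagonal (fun v => (G.degree v : ℝ))
    let L : Matrix V V ℝ := D - A
    let B : Matrix V V ℝ := Matrix.diagonal β
    let Γ : Matrix V V ℝ := Matrix.diagonal γ
    let H : Matrix V V ℝ := B + D * Γ
    ∀ μ ∈ spectrum ℂ ((L * Γ * H⁻¹).map (Complex.ofReal)), ‖μ‖ < 1 := by
  intro A D L B Γ H μ hμ
  set h : V → ℝ := fun v => β v + G.degree v * γ v
  have hh : ∀ v, 0 < h v := fun v =>
    add_pos_of_pos_of_nonneg (hβ v) (mul_nonneg (Nat.cast_nonneg _) (hγ v).le)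
  have hH : H⁻¹ = diagonal fun v => (h v)⁻¹ := by
    refine inv_eq_right_inv ?_
    simp only [H, B, D, Γ, diagonal_mul_diagonal, diagonal_add, h]
    rw [← diagonal_one]
    exact congrArg diagonal (funext fun v => mul_inv_cancel₀ (hh v).ne')
  have hL : L = G.lapMatrix ℝ := rfl
  refine norm_lt_of_mem_spectrum_of_sum_norm_col_lt (fun j => ?_) hμ
  have hdγ : G.degree j * γ j < β j := (div_lt_one (hβ j)).mp (hd j)
  calc ∑ i, ‖((L * Γ * H⁻¹).map Complex.ofReal) i j‖
      = (∑ i, |G.lapMatrix ℝ i j|) * (γ j / h j) := by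
        simp only [hH, hL, Γ, mul_diagonal, map_apply, Complex.norm_real, Real.norm_eq_abs]
        simp only [sum_mul, abs_mul, abs_inv, abs_of_pos (hγ j), abs_of_pos (hh j), div_eq_mul_inv,
          mul_assoc]
    _ = 2 * (G.degree j * γ j) / h j := by rw [G.sum_abs_lapMatrix_apply_left]; ring
    _ < 1 := by rw [div_lt_one (hh j)]; linarith

/-- Under the condition `d_u γ_u / β_u < 1`, the spectral radius of `L Γ H⁻¹` is
strictly less than `1`, where `H = B + DΓ`. -/
theorem spectral_radius_LGammaHinv_lt_one {V : Type*} [Fintype V] [DecidableEq V]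
    (G : SimpleGraph V) [DecidableRel G.Adj]
    (hiso : ∀ v, 0 < G.degree v)
    (β γ : V → ℝ) (hβ : ∀ v, 0 < β v) (hγ : ∀ v, 0 < γ v)
    (hd : ∀ v, (G.degree v : ℝ) * γ v / β v < 1) :
    let A : Matrix V V ℝ := G.adjMatrix ℝ
    let D : Matrix V V ℝ := Matrix.diagonal (fun v => (G.degree v : ℝ))
    let L : Matrix V V ℝ := D - A
    let B : Matrix V V ℝ := Matrix.diagonal β
    let Γ : Matrix V V ℝ := Matrix.diagonal γ
    let H : Matrix V V ℝ := B + D * Γ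
    ∀ μ ∈ spectrum ℂ ((L * Γ * H⁻¹).map (Complex.ofReal)), ‖μ‖ < 1 :=
  spectral_radius_LGammaHinv_lt_one_general G β γ hβ hγ hd
end

section
/- For s > 0, the function τ(x) = W(sx)/(x(1+W(sx))) defined for x > 0 is strictly decreasing, with derivative τ'(x) = −W(sx)²(2+W(sx))/(x²(1+W(sx))³). -/
/-!
Writing `u x = W (s * x)`, the chain rule and the Lambert ODE `W' = W / (z (1 + W))` give
`u' = u / (x (1 + u))`, so `τ = u'`. Differentiating `τ` once more and substituting the ODE
for `u'` yields `τ' = -u² (2 + u) / (x² (1 + u)³)`, which is negative because `u > 0`.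
-/

open Set Real

theorem strictMonoOn_mul_exp : StrictMonoOn (fun t : ℝ => t * exp t) (Ioi 0) :=
  fun _ _ _ hb hab => mul_lt_mul hab (exp_le_exp.2 hab.le) (exp_pos _) (le_of_lt hb)

section Lambert

variable {W : ℝ → ℝ} (hWpos : ∀ x > 0, 0 < W x) (hW : ∀ x > 0, W x * exp (W x) = x)
include hWpos hW

theorem lambert_mul_exp {t : ℝ} (ht : 0 < t) : W (t * exp t) = t := by
  have hft : 0 < t * exp t := mul_pos ht (exp_pos t)
  exact strictMonoOn_mul_exp.injOn (hWpos _ hft) ht (hW _ hft)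

theorem lambert_strictMonoOn : StrictMonoOn W (Ioi 0) := fun a ha b hb hab => by
  have key := strictMonoOn_mul_exp.lt_iff_lt (hWpos a ha) (hWpos b hb)
  simp only [hW a ha, hW b hb] at key
  exact key.1 hab

theorem lambert_image_Ioi : W '' Ioi 0 = Ioi 0 := by
  ext t
  constructor
  · rintro ⟨x, hx, rfl⟩
    exact hWpos x hx
  · intro ht
    exact ⟨t * exp t, mul_pos ht (exp_pos t), lambert_mul_exp hWpos hW ht⟩

theorem lambert_continuousAt {x : ℝ} (hx : 0 < x) : ContinuousAt W x := by
  refine (lambert_strictMonoOn hWpos hW).continuousAt_of_image_mem_nhds (Ioi_mem_nhds hx) ?_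
  rw [lambert_image_Ioi hWpos hW]
  exact Ioi_mem_nhds (hWpos x hx)

theorem lambert_hasDerivAt {x : ℝ} (hx : 0 < x) : HasDerivAt W (W x / (x * (1 + W x))) x := by
  have hw := hWpos x hx
  have hf : HasDerivAt (fun t => t * exp t) ((1 + W x) * exp (W x)) (W x) :=
    (hasDerivAt_id' (W x)).mul (hasDerivAt_exp (W x)) |>.congr_deriv (by ring)
  have hinv : ∀ᶠ y in nhds x, W y * exp (W y) = y :=
    Filter.eventually_of_mem (Ioi_mem_nhds hx) hW
  have hexp : exp (W x) = x / W x := by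
    rw [eq_div_iff hw.ne', mul_comm, hW x hx]
  refine (hf.of_local_left_inverse (lambert_continuousAt hWpos hW hx) (by positivity)
    hinv).congr_deriv ?_
  rw [hexp]
  field_simp

theorem lambert_comp_mul_hasDerivAt {s x : ℝ} (hs : 0 < s) (hx : 0 < x) :
    HasDerivAt (fun y => W (s * y)) (W (s * x) / (x * (1 + W (s * x)))) x := by
  have hsx : 0 < s * x := mul_pos hs hx
  have h1 : 0 < 1 + W (s * x) := by linarith [hWpos _ hsx]
  refine ((lambert_hasDerivAt hWpos hW hsx).comp x ((hasDerivAt_id' x).const_mul s)).congr_deriv ?_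
  field_simp

end Lambert

theorem hasDerivAt_div_mul_one_add {u : ℝ → ℝ} {x : ℝ} (hx : x ≠ 0) (hu : 1 + u x ≠ 0)
    (h : HasDerivAt u (u x / (x * (1 + u x))) x) :
    HasDerivAt (fun y => u y / (y * (1 + u y)))
      (-(u x ^ 2 * (2 + u x)) / (x ^ 2 * (1 + u x) ^ 3)) x := by
  have hden : HasDerivAt (fun y => y * (1 + u y)) _ x := (hasDerivAt_id' x).mul (h.const_add 1)
  refine (h.div hden (mul_ne_zero hx hu)).congr_deriv ?_
  field_simp
  ring

/-- For `s > 0`, the function `τ(x) = W(sx)/(x(1+W(sx)))` is strictly decreasing on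
`(0,∞)` with derivative `-W(sx)²(2+W(sx))/(x²(1+W(sx))³)`. -/
theorem tau_strictAnti_and_deriv {W : ℝ → ℝ}
    (hWpos : ∀ x > 0, 0 < W x)
    (hW : ∀ x > 0, W x * Real.exp (W x) = x)
    (s : ℝ) (hs : 0 < s) :
    let τ : ℝ → ℝ := fun x => W (s * x) / (x * (1 + W (s * x)))
    StrictAntiOn τ (Set.Ioi 0) ∧
      ∀ x > 0, HasDerivAt τ
        (-((W (s * x)) ^ 2 * (2 + W (s * x))) / (x ^ 2 * (1 + W (s * x)) ^ 3)) x := by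
  intro τ
  have hderiv : ∀ x > 0, HasDerivAt τ
      (-((W (s * x)) ^ 2 * (2 + W (s * x))) / (x ^ 2 * (1 + W (s * x)) ^ 3)) x := fun x hx =>
    have hw := hWpos _ (mul_pos hs hx)
    hasDerivAt_div_mul_one_add hx.ne' (by positivity)
      (lambert_comp_mul_hasDerivAt hWpos hW hs hx)
  refine ⟨?_, hderiv⟩
  refine strictAntiOn_of_deriv_neg (convex_Ioi 0)
    (fun x hx => (hderiv x hx).continuousAt.continuousWithinAt) fun x hx => ?_
  rw [interior_Ioi, mem_Ioi] at hx
  rw [(hderiv x hx).deriv]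
  have hw := hWpos _ (mul_pos hs hx)
  have hnum : 0 < W (s * x) ^ 2 * (2 + W (s * x)) := by positivity
  exact div_neg_of_neg_of_pos (neg_neg_of_pos hnum) (by positivity)
end
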